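/- Let G be a locally indicable group with normal subgroup N, let ≤₁ be a Conradian left-order of N and ≤₂ a Conradian left-order of G/N. Then P = P_{≤₁} ∪ {g ∈ G | eN <₂ gN} is the positive cone of a left-order ≤ of G; a subgroup U of G is convex with respect to ≤ if and only if either U ⊆ N and U is convex in N w.r.t. ≤₁, or N ⊆ U and U/N is convex in G/N w.r.t. ≤₂; and ≤ is Conradian. -/

import Mathlib

/-! Membership of `g` in the lexicographic cone `P` is decided by `gN` in `G ⧸ N`, unless
`g ∈ N`, where `≤₁` decides. Hence `a ≤ b` forces `aN ≤₂ bN`, and `aN <₂ bN` forces `a < b`;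
in particular `N` is convex. A convex subgroup `U ⊄ N` contains some `u` with `eN <₂ uN`, and
then `u⁻¹ < v < u` for every `v ∈ N`, so `N ⊆ U`; convexity of `U` then passes to `U` in `N`
or to `U/N` in `G ⧸ N`. For the Conradian property, if `a, b ∈ N` use `≤₁`; otherwise
`eN ≤₂ aN, bN` with one of them strict, and the Conradian property of `≤₂` (or `x < x²` when
one factor lies in `N`) yields `ab < (ba)ⁿ` already modulo `N`. -/

/-- Convexity of a subgroup with respect to an abstract order relation `r`. -/
def IsConvexRel {H : Type*} [Group H] (r : H → H → Prop) (C : Subgroup H) : Prop :=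
  ∀ a b c : H, r a b → r b c → a ∈ C → c ∈ C → b ∈ C

/-- Convexity of a subgroup of a left-ordered group. -/
def IsConvexIn {H : Type*} [Group H] [LinearOrder H] (C : Subgroup H) : Prop :=
  ∀ a b c : H, a ≤ b → b ≤ c → a ∈ C → c ∈ C → b ∈ C

theorem leftOrder_of_positiveCone {G : Type*} [Group G] {P : Set G} (one_mem : (1 : G) ∈ P)
    (mul_mem : ∀ {a b}, a ∈ P → b ∈ P → a * b ∈ P)
    (mem_or_inv_mem : ∀ g, g ∈ P ∨ g⁻¹ ∈ P) (eq_one : ∀ {g}, g ∈ P → g⁻¹ ∈ P → g = 1) :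
    (∀ a : G, a⁻¹ * a ∈ P) ∧ (∀ a b : G, a⁻¹ * b ∈ P → b⁻¹ * a ∈ P → a = b) ∧
      (∀ a b c : G, a⁻¹ * b ∈ P → b⁻¹ * c ∈ P → a⁻¹ * c ∈ P) ∧
      (∀ a b : G, a⁻¹ * b ∈ P ∨ b⁻¹ * a ∈ P) ∧
      (∀ a b c : G, a⁻¹ * b ∈ P → (c * a)⁻¹ * (c * b) ∈ P) ∧ {a : G | 1⁻¹ * a ∈ P} = P := by
  refine ⟨fun a => ?_, fun a b hab hba => ?_, fun a b c hab hbc => ?_, fun a b => ?_,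
    fun a b c hab => ?_, by simp⟩
  · rwa [inv_mul_cancel]
  · rw [← inv_mul_eq_one, eq_one hab (by rwa [mul_inv_rev, inv_inv])]
  · simpa [mul_assoc] using mul_mem hab hbc
  · simpa using mem_or_inv_mem (a⁻¹ * b)
  · rwa [mul_inv_rev, mul_assoc, inv_mul_cancel_left]

theorem exists_mul_lt_pow_of_one_le {H : Type*} [Group H] [LinearOrder H] [MulLeftMono H]
    (hc : ∀ a b : H, 1 < a → 1 < b → ∃ n : ℕ, a * b < (b * a) ^ n) {a b : H}
    (ha : 1 ≤ a) (hb : 1 ≤ b) (hab : 1 < a ∨ 1 < b) : ∃ n : ℕ, a * b < (b * a) ^ n := by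
  rcases ha.eq_or_lt with rfl | ha
  · exact ⟨2, by simpa [pow_two] using hab⟩
  rcases hb.eq_or_lt with rfl | hb
  · exact ⟨2, by simpa [pow_two] using ha⟩
  exact hc a b ha hb

theorem QuotientGroup.mk_mem_map_mk'_iff {G : Type*} [Group G] {N U : Subgroup G} [N.Normal]
    (hU : N ≤ U) {g : G} : (g : G ⧸ N) ∈ U.map (QuotientGroup.mk' N) ↔ g ∈ U := by
  have hker : (QuotientGroup.mk' N).ker ≤ U := by rwa [QuotientGroup.ker_mk']
  exact SetLike.ext_iff.1 (Subgroup.comap_map_eq_self hker) g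

section LexicographicCone

variable {G : Type*} [Group G] (N : Subgroup G) [N.Normal] [LinearOrder N] [LinearOrder (G ⧸ N)]

def lexCone : Set G :=
  {g : G | ∃ h : ↥N, (h : G) = g ∧ 1 ≤ h} ∪ {g : G | (1 : G ⧸ N) < QuotientGroup.mk g}

def lexRel (a b : G) : Prop := a⁻¹ * b ∈ lexCone N

variable {N}

theorem mem_lexCone_iff_of_mem {g : G} (hg : g ∈ N) : g ∈ lexCone N ↔ 1 ≤ (⟨g, hg⟩ : N) := by
  refine ⟨?_, fun h => Or.inl ⟨_, rfl, h⟩⟩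
  rintro (⟨h, rfl, hh⟩ | hlt)
  · exact hh
  · exact absurd ((QuotientGroup.eq_one_iff g).2 hg) hlt.ne'

theorem mem_lexCone_iff_of_notMem {g : G} (hg : g ∉ N) :
    g ∈ lexCone N ↔ (1 : G ⧸ N) < g := by
  refine ⟨?_, Or.inr⟩
  rintro (⟨h, rfl, _⟩ | hlt)
  · exact absurd h.2 hg
  · exact hlt

theorem mem_lexCone_of_one_lt_mk {g : G} (hg : (1 : G ⧸ N) < g) : g ∈ lexCone N :=
  Or.inr hg

theorem one_le_mk_of_mem_lexCone {g : G} (hg : g ∈ lexCone N) : (1 : G ⧸ N) ≤ g := by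
  by_cases hgN : g ∈ N
  · exact ((QuotientGroup.eq_one_iff g).2 hgN).ge
  · exact ((mem_lexCone_iff_of_notMem hgN).1 hg).le

theorem one_mem_lexCone : (1 : G) ∈ lexCone N :=
  (mem_lexCone_iff_of_mem N.one_mem).2 le_rfl

theorem lexRel_coe_iff [MulLeftMono N] {x y : N} : lexRel N x y ↔ x ≤ y := by
  change ((x⁻¹ * y : N) : G) ∈ lexCone N ↔ _
  rw [mem_lexCone_iff_of_mem (x⁻¹ * y).2, le_inv_mul_iff_mul_le, mul_one]

theorem lexRel_and_ne_of_lt [MulLeftMono N] {x y : N} (h : x < y) :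
    lexRel N x y ∧ (x : G) ≠ y :=
  ⟨lexRel_coe_iff.2 h.le, Subtype.coe_injective.ne h.ne⟩

variable [MulLeftMono (G ⧸ N)]

theorem mk_le_mk_of_lexRel {a b : G} (h : lexRel N a b) : (a : G ⧸ N) ≤ b := by
  have := one_le_mk_of_mem_lexCone h
  rwa [QuotientGroup.mk_mul, QuotientGroup.mk_inv, le_inv_mul_iff_mul_le, mul_one] at this

theorem lexRel_of_mk_lt_mk {a b : G} (h : (a : G ⧸ N) < b) : lexRel N a b :=
  mem_lexCone_of_one_lt_mk (by
    rwa [QuotientGroup.mk_mul, QuotientGroup.mk_inv, lt_inv_mul_iff_mul_lt, mul_one])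

theorem lexRel_and_ne_of_mk_lt_mk {a b : G} (h : (a : G ⧸ N) < b) : lexRel N a b ∧ a ≠ b :=
  ⟨lexRel_of_mk_lt_mk h, fun hab => h.ne (congrArg _ hab)⟩

theorem isConvexRel_lexRel_self : IsConvexRel (lexRel N) N := by
  intro a b c hab hbc ha hc
  have hb : (b : G ⧸ N) ≤ 1 :=
    (mk_le_mk_of_lexRel hbc).trans ((QuotientGroup.eq_one_iff c).2 hc).le
  have hb' : (1 : G ⧸ N) ≤ b :=
    ((QuotientGroup.eq_one_iff a).2 ha).ge.trans (mk_le_mk_of_lexRel hab)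
  exact (QuotientGroup.eq_one_iff b).1 (le_antisymm hb hb')

theorem isConvexRel_lexRel_iff_of_ge {U : Subgroup G} (hU : N ≤ U) :
    IsConvexRel (lexRel N) U ↔ IsConvexIn (U.map (QuotientGroup.mk' N)) := by
  constructor
  · intro hconv x y z hxy hyz hx hz
    rcases hxy.eq_or_lt with rfl | hxy
    · exact hx
    rcases hyz.eq_or_lt with rfl | hyz
    · exact hz
    induction x using QuotientGroup.induction_on with | H a => ?_
    induction y using QuotientGroup.induction_on with | H b => ?_
    induction z using QuotientGroup.induction_on with | H c => ?_
    rw [QuotientGroup.mk_mem_map_mk'_iff hU] at hx hz ⊢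
    exact hconv a b c (lexRel_of_mk_lt_mk hxy) (lexRel_of_mk_lt_mk hyz) hx hz
  · intro hconv a b c hab hbc ha hc
    rw [← QuotientGroup.mk_mem_map_mk'_iff hU] at ha hc ⊢
    exact hconv _ _ _ (mk_le_mk_of_lexRel hab) (mk_le_mk_of_lexRel hbc) ha hc

theorem le_of_isConvexRel_lexRel {U : Subgroup G} (hconv : IsConvexRel (lexRel N) U)
    (hUN : ¬U ≤ N) : N ≤ U := by
  obtain ⟨u, huU, hu⟩ : ∃ u ∈ U, (1 : G ⧸ N) < u := by
    obtain ⟨g, hgU, hgN⟩ := SetLike.not_le_iff_exists.1 hUN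
    rcases lt_or_gt_of_ne fun h => hgN ((QuotientGroup.eq_one_iff g).1 h.symm) with h | h
    · exact ⟨g, hgU, h⟩
    · exact ⟨g⁻¹, inv_mem hgU, by rwa [QuotientGroup.mk_inv, Left.one_lt_inv_iff]⟩
  intro v hv
  have hv1 : (v : G ⧸ N) = 1 := (QuotientGroup.eq_one_iff v).2 hv
  refine hconv u⁻¹ v u (lexRel_of_mk_lt_mk ?_) (lexRel_of_mk_lt_mk ?_) (inv_mem huU) huU
  · rwa [hv1, QuotientGroup.mk_inv, Left.inv_lt_one_iff]
  · rwa [hv1]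

variable [MulLeftMono N]

theorem mul_mem_lexCone {a b : G} (ha : a ∈ lexCone N) (hb : b ∈ lexCone N) :
    a * b ∈ lexCone N := by
  by_cases haN : a ∈ N <;> by_cases hbN : b ∈ N
  · rw [mem_lexCone_iff_of_mem haN] at ha
    rw [mem_lexCone_iff_of_mem hbN] at hb
    exact (mem_lexCone_iff_of_mem (mul_mem haN hbN)).2 (one_le_mul ha hb)
  · rw [mem_lexCone_iff_of_notMem hbN] at hb
    exact mem_lexCone_of_one_lt_mk
      (by rwa [QuotientGroup.mk_mul, (QuotientGroup.eq_one_iff a).2 haN, one_mul])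
  · rw [mem_lexCone_iff_of_notMem haN] at ha
    exact mem_lexCone_of_one_lt_mk
      (by rwa [QuotientGroup.mk_mul, (QuotientGroup.eq_one_iff b).2 hbN, mul_one])
  · rw [mem_lexCone_iff_of_notMem haN] at ha
    rw [mem_lexCone_iff_of_notMem hbN] at hb
    exact mem_lexCone_of_one_lt_mk (by rw [QuotientGroup.mk_mul]; exact Left.one_lt_mul' ha hb)

theorem mem_lexCone_or_inv_mem (g : G) : g ∈ lexCone N ∨ g⁻¹ ∈ lexCone N := by
  by_cases hg : g ∈ N
  · rw [mem_lexCone_iff_of_mem hg, mem_lexCone_iff_of_mem (inv_mem hg)]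
    exact (le_total 1 _).imp id Left.one_le_inv_iff.2
  · rw [mem_lexCone_iff_of_notMem hg, mem_lexCone_iff_of_notMem (inv_mem_iff.not.2 hg),
      QuotientGroup.mk_inv, Left.one_lt_inv_iff, or_comm]
    exact lt_or_gt_of_ne fun h => hg ((QuotientGroup.eq_one_iff g).1 h)

theorem eq_one_of_mem_lexCone_of_inv_mem {g : G} (hg : g ∈ lexCone N)
    (hg' : g⁻¹ ∈ lexCone N) : g = 1 := by
  by_cases hgN : g ∈ N
  · rw [mem_lexCone_iff_of_mem hgN] at hg
    rw [mem_lexCone_iff_of_mem (inv_mem hgN)] at hg'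
    exact congrArg Subtype.val (le_antisymm (Left.one_le_inv_iff.1 hg') hg)
  · rw [mem_lexCone_iff_of_notMem hgN] at hg
    rw [mem_lexCone_iff_of_notMem (inv_mem_iff.not.2 hgN), QuotientGroup.mk_inv,
      Left.one_lt_inv_iff] at hg'
    exact absurd hg hg'.asymm

theorem isConvexRel_lexRel_iff_of_le {U : Subgroup G} (hU : U ≤ N) :
    IsConvexRel (lexRel N) U ↔ IsConvexIn (U.subgroupOf N) := by
  constructor
  · intro hconv x y z hxy hyz hx hz
    exact hconv x y z (lexRel_coe_iff.2 hxy) (lexRel_coe_iff.2 hyz) hx hz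
  · intro hconv a b c hab hbc ha hc
    have hb := isConvexRel_lexRel_self a b c hab hbc (hU ha) (hU hc)
    exact hconv ⟨a, hU ha⟩ ⟨b, hb⟩ ⟨c, hU hc⟩ (lexRel_coe_iff.1 hab) (lexRel_coe_iff.1 hbc) ha hc

theorem isConvexRel_lexRel_iff {U : Subgroup G} :
    IsConvexRel (lexRel N) U ↔ (U ≤ N ∧ IsConvexIn (U.subgroupOf N)) ∨
      (N ≤ U ∧ IsConvexIn (U.map (QuotientGroup.mk' N))) := by
  constructor
  · intro hconv
    by_cases hUN : U ≤ N
    · exact Or.inl ⟨hUN, (isConvexRel_lexRel_iff_of_le hUN).1 hconv⟩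
    · have hNU := le_of_isConvexRel_lexRel hconv hUN
      exact Or.inr ⟨hNU, (isConvexRel_lexRel_iff_of_ge hNU).1 hconv⟩
  · rintro (⟨hUN, hconv⟩ | ⟨hNU, hconv⟩)
    · exact (isConvexRel_lexRel_iff_of_le hUN).2 hconv
    · exact (isConvexRel_lexRel_iff_of_ge hNU).2 hconv

theorem exists_lexRel_mul_pow (hc1 : ∀ a b : N, 1 < a → 1 < b → ∃ n : ℕ, a * b < (b * a) ^ n)
    (hc2 : ∀ a b : G ⧸ N, 1 < a → 1 < b → ∃ n : ℕ, a * b < (b * a) ^ n) {a b : G}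
    (ha : lexRel N 1 a) (ha1 : a ≠ 1) (hb : lexRel N 1 b) (hb1 : b ≠ 1) :
    ∃ n : ℕ, lexRel N (a * b) ((b * a) ^ n) ∧ a * b ≠ (b * a) ^ n := by
  by_cases hN : a ∈ N ∧ b ∈ N
  · obtain ⟨haN, hbN⟩ := hN
    have one_lt {g : G} (hg : g ∈ N) (h : lexRel N 1 g) (h1 : g ≠ 1) : 1 < (⟨g, hg⟩ : N) :=
      (lexRel_coe_iff (x := 1) (y := ⟨g, hg⟩)).1 h |>.lt_of_ne
        fun h' => h1 (congrArg Subtype.val h'.symm)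
    obtain ⟨n, hn⟩ := hc1 _ _ (one_lt haN ha ha1) (one_lt hbN hb hb1)
    exact ⟨n, by simpa using lexRel_and_ne_of_lt hn⟩
  · have one_le {g : G} (h : lexRel N 1 g) : (1 : G ⧸ N) ≤ g := by
      simpa using mk_le_mk_of_lexRel h
    have one_lt_of_notMem {g : G} (h : lexRel N 1 g) (hg : g ∉ N) : (1 : G ⧸ N) < g :=
      (one_le h).lt_of_ne fun h1 => hg ((QuotientGroup.eq_one_iff g).1 h1.symm)
    obtain ⟨n, hn⟩ := exists_mul_lt_pow_of_one_le hc2 (one_le ha) (one_le hb)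
      ((not_and_or.1 hN).imp (one_lt_of_notMem ha) (one_lt_of_notMem hb))
    exact ⟨n, lexRel_and_ne_of_mk_lt_mk (by simpa using hn)⟩

end LexicographicCone

theorem stmt19_general {G : Type*} [Group G] (N : Subgroup G) [N.Normal]
    [LinearOrder ↥N] [LinearOrder (G ⧸ N)]
    (hinv1 : ∀ a b c : ↥N, a ≤ b → c * a ≤ c * b)
    (hc1 : ∀ a b : ↥N, 1 < a → 1 < b → ∃ n : ℕ, a * b < (b * a) ^ n)
    (hinv2 : ∀ a b c : G ⧸ N, a ≤ b → c * a ≤ c * b)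
    (hc2 : ∀ a b : G ⧸ N, 1 < a → 1 < b → ∃ n : ℕ, a * b < (b * a) ^ n) :
    ∀ P : Set G, P = {g : G | ∃ h : ↥N, (h : G) = g ∧ 1 ≤ h} ∪
        {g : G | (1 : G ⧸ N) < QuotientGroup.mk g} →
    ∀ r : G → G → Prop, r = (fun a b : G => a⁻¹ * b ∈ P) →
    -- `r` is a left-order of `G` with positive cone `P`
    ((∀ a, r a a) ∧ (∀ a b, r a b → r b a → a = b) ∧
      (∀ a b c, r a b → r b c → r a c) ∧ (∀ a b, r a b ∨ r b a) ∧
      (∀ a b c, r a b → r (c * a) (c * b)) ∧ {a : G | r 1 a} = P) ∧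
    -- characterization of the convex subgroups of `r`
    (∀ U : Subgroup G, IsConvexRel r U ↔
      ((U ≤ N ∧ IsConvexIn (U.subgroupOf N)) ∨
        (N ≤ U ∧ IsConvexIn (U.map (QuotientGroup.mk' N))))) ∧
    -- `r` is Conradian
    (∀ a b : G, r 1 a → a ≠ 1 → r 1 b → b ≠ 1 →
      ∃ n : ℕ, r (a * b) ((b * a) ^ n) ∧ a * b ≠ (b * a) ^ n) := by
  have : MulLeftMono N := ⟨fun c _ _ h => hinv1 _ _ c h⟩
  have : MulLeftMono (G ⧸ N) := ⟨fun c _ _ h => hinv2 _ _ c h⟩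
  rintro P rfl r rfl
  exact ⟨leftOrder_of_positiveCone one_mem_lexCone mul_mem_lexCone mem_lexCone_or_inv_mem
      eq_one_of_mem_lexCone_of_inv_mem,
    fun U => isConvexRel_lexRel_iff, fun a b => exists_lexRel_mul_pow hc1 hc2⟩

/-- Let `G` be locally indicable, `N ⊴ G`, `≤₁` a Conradian left-order on
`N` and `≤₂` a Conradian left-order on `G/N`. Then
`P = P_{≤₁} ∪ {g | eN <₂ gN}` is the positive cone of a left-order `≤` of `G` (given by
`a ≤ b ↔ a⁻¹b ∈ P`); a subgroup `U` is convex for `≤` iff `U ⊆ N` and `U` is convex in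
`N`, or `N ⊆ U` and `U/N` is convex in `G/N`; and `≤` is Conradian. -/
theorem stmt19 {G : Type*} [Group G] (N : Subgroup G) [N.Normal]
    (hli : ∀ H : Subgroup G, H ≠ ⊥ → H.FG →
      ∃ f : ↥H →* Multiplicative ℤ, Function.Surjective f)
    [LinearOrder ↥N] [LinearOrder (G ⧸ N)]
    (hinv1 : ∀ a b c : ↥N, a ≤ b → c * a ≤ c * b)
    (hc1 : ∀ a b : ↥N, 1 < a → 1 < b → ∃ n : ℕ, a * b < (b * a) ^ n)
    (hinv2 : ∀ a b c : G ⧸ N, a ≤ b → c * a ≤ c * b)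
    (hc2 : ∀ a b : G ⧸ N, 1 < a → 1 < b → ∃ n : ℕ, a * b < (b * a) ^ n) :
    ∀ P : Set G, P = {g : G | ∃ h : ↥N, (h : G) = g ∧ 1 ≤ h} ∪
        {g : G | (1 : G ⧸ N) < QuotientGroup.mk g} →
    ∀ r : G → G → Prop, r = (fun a b : G => a⁻¹ * b ∈ P) →
    -- `r` is a left-order of `G` with positive cone `P`
    ((∀ a, r a a) ∧ (∀ a b, r a b → r b a → a = b) ∧
      (∀ a b c, r a b → r b c → r a c) ∧ (∀ a b, r a b ∨ r b a) ∧
      (∀ a b c, r a b → r (c * a) (c * b)) ∧ {a : G | r 1 a} = P) ∧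
    -- characterization of the convex subgroups of `r`
    (∀ U : Subgroup G, IsConvexRel r U ↔
      ((U ≤ N ∧ IsConvexIn (U.subgroupOf N)) ∨
        (N ≤ U ∧ IsConvexIn (U.map (QuotientGroup.mk' N))))) ∧
    -- `r` is Conradian
    (∀ a b : G, r 1 a → a ≠ 1 → r 1 b → b ≠ 1 →
      ∃ n : ℕ, r (a * b) ((b * a) ^ n) ∧ a * b ≠ (b * a) ^ n) :=
  stmt19_general N hinv1 hc1 hinv2 hc2
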